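/- arXiv:1710.06208 — 6 statements merged into one kernel-verified Lean document; each statement's English description precedes it below -/
import Mathlib

section
/- A numerical semigroup S is irreducible (i.e., it cannot be written as the intersection of two numerical semigroups each properly containing S) if and only if the number of special gaps of S is at most 1. -/
/-- A numerical semigroup: subset of ℕ closed under addition, containing 0, cofinite. -/
def IsNumericalSemigroup (S : Set ℕ) : Prop :=
  0 ∈ S ∧ (∀ a b, a ∈ S → b ∈ S → a + b ∈ S) ∧ Sᶜ.Finite

/-- The set of special gaps E(S). -/
def specialGaps (S : Set ℕ) : Set ℕ :=
  {x | x ∉ S ∧ 2 * x ∈ S ∧ ∀ s ∈ S, s ≠ 0 → x + s ∈ S}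

/-- `F` is the Frobenius number of `S`: the greatest natural number not in `S`. -/
def IsFrobenius (S : Set ℕ) (F : ℕ) : Prop :=
  F ∉ S ∧ ∀ m : ℕ, m ∉ S → m ≤ F

/-- Irreducible numerical semigroup. -/
def IsIrreducibleNS (S : Set ℕ) : Prop :=
  IsNumericalSemigroup S ∧ ∀ S₁ S₂ : Set ℕ, IsNumericalSemigroup S₁ →
    IsNumericalSemigroup S₂ → S = S₁ ∩ S₂ → S = S₁ ∨ S = S₂

/-- Atomic numerical semigroup. -/
def IsAtomicNS (S : Set ℕ) : Prop :=
  IsNumericalSemigroup S ∧ ∀ (F : ℕ) (S₁ S₂ : Set ℕ), IsFrobenius S F →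
    IsNumericalSemigroup S₁ → IsNumericalSemigroup S₂ →
    IsFrobenius S₁ F → IsFrobenius S₂ F → S = S₁ ∩ S₂ → S = S₁ ∨ S = S₂

/-- Pseudo-Frobenius numbers of `S`, as integers. -/
def pseudoFrob (S : Set ℕ) : Set ℤ :=
  {x | x ∉ (fun n : ℕ => (n : ℤ)) '' S ∧
    ∀ s ∈ S, s ≠ 0 → x + (s : ℤ) ∈ (fun n : ℕ => (n : ℤ)) '' S}

/-- The semigroup C(F): 0 together with all naturals greater than F/2, except F. -/
def NSC (F : ℕ) : Set ℕ := insert 0 ({n : ℕ | F / 2 < n} \ {F})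

/-- `x` is a minimal generator of `S`. -/
def IsMinGen (S : Set ℕ) (x : ℕ) : Prop :=
  x ∈ S ∧ x ≠ 0 ∧ ∀ a b, a ∈ S → b ∈ S → a ≠ 0 → b ≠ 0 → a + b ≠ x

/-!
Adjoining a special gap `x` to `S` gives again a numerical semigroup, so two distinct special
gaps `x ≠ y` decompose `S = (S ∪ {x}) ∩ (S ∪ {y})`. Conversely, if `S ⊊ T` with `T` closed
under addition, the largest element of `T \ S` is a special gap of `S` lying in `T`. So a
decomposition `S = S₁ ∩ S₂` with both factors strictly larger yields special gaps `x₁ ∈ S₁` and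
`x₂ ∈ S₂`, and these differ because no gap of `S` lies in `S₁ ∩ S₂ = S`.
-/

namespace IsNumericalSemigroup

variable {S : Set ℕ}

theorem insert_of_mem_specialGaps (hS : IsNumericalSemigroup S) {x : ℕ}
    (hx : x ∈ specialGaps S) : IsNumericalSemigroup (insert x S) := by
  obtain ⟨-, h2x, hadd⟩ := hx
  refine ⟨Or.inr hS.1, ?_, hS.2.2.subset (Set.compl_subset_compl.mpr (Set.subset_insert x S))⟩
  rintro a b (rfl | ha) (rfl | hb)
  · exact Or.inr (by rwa [two_mul] at h2x)
  · rcases eq_or_ne b 0 with rfl | hb0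
    · exact Or.inl rfl
    · exact Or.inr (hadd b hb hb0)
  · rcases eq_or_ne a 0 with rfl | ha0
    · exact Or.inl (zero_add b)
    · exact Or.inr (add_comm a b ▸ hadd a ha ha0)
  · exact Or.inr (hS.2.1 a b ha hb)

theorem exists_mem_specialGaps_of_ssubset (hS : IsNumericalSemigroup S) {T : Set ℕ}
    (hT : ∀ a b, a ∈ T → b ∈ T → a + b ∈ T) (hST : S ⊂ T) :
    ∃ x ∈ specialGaps S, x ∈ T := by
  obtain ⟨x, ⟨hxT, hxS⟩, hmax⟩ := Set.exists_max_image (T \ S) id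
    (hS.2.2.subset fun _ hy => hy.2) (Set.nonempty_of_ssubset hST)
  have hx0 : x ≠ 0 := fun h => hxS (h ▸ hS.1)
  have mem_of_lt : ∀ y ∈ T, x < y → y ∈ S := fun y hy hlt =>
    by_contra fun hyS => (hmax y ⟨hy, hyS⟩).not_gt hlt
  refine ⟨x, ⟨hxS, ?_, fun s hs hs0 => ?_⟩, hxT⟩
  · rw [two_mul]
    exact mem_of_lt _ (hT x x hxT hxT) (by omega)
  · exact mem_of_lt _ (hT x s hxT (hST.subset hs)) (by omega)

end IsNumericalSemigroup

theorem IsIrreducibleNS.encard_specialGaps_le_one {S : Set ℕ} (hirr : IsIrreducibleNS S) :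
    (specialGaps S).encard ≤ 1 := by
  refine Set.encard_le_one_iff.mpr fun x y hx hy => by_contra fun hxy => ?_
  have hdecomp : S = insert x S ∩ insert y S := by
    rw [← Set.union_singleton, ← Set.union_singleton, ← Set.union_inter_distrib_left,
      (Set.singleton_inter_eq_empty (s := {y})).mpr hxy, Set.union_empty]
  rcases hirr.2 _ _ (hirr.1.insert_of_mem_specialGaps hx)
      (hirr.1.insert_of_mem_specialGaps hy) hdecomp with h | h
  · exact hx.1 (h ▸ Set.mem_insert x S)
  · exact hy.1 (h ▸ Set.mem_insert y S)

theorem isIrreducibleNS_of_encard_specialGaps_le_one {S : Set ℕ} (hS : IsNumericalSemigroup S)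
    (hcard : (specialGaps S).encard ≤ 1) : IsIrreducibleNS S := by
  refine ⟨hS, fun S₁ S₂ hS₁ hS₂ hdecomp => ?_⟩
  by_contra! hne
  have hsub₁ : S ⊂ S₁ := (hdecomp ▸ Set.inter_subset_left).ssubset_of_ne hne.1
  have hsub₂ : S ⊂ S₂ := (hdecomp ▸ Set.inter_subset_right).ssubset_of_ne hne.2
  obtain ⟨x₁, hx₁, hx₁S₁⟩ := hS.exists_mem_specialGaps_of_ssubset hS₁.2.1 hsub₁
  obtain ⟨x₂, hx₂, hx₂S₂⟩ := hS.exists_mem_specialGaps_of_ssubset hS₂.2.1 hsub₂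
  obtain rfl : x₁ = x₂ := Set.encard_le_one_iff.mp hcard x₁ x₂ hx₁ hx₂
  exact hx₁.1 (hdecomp ▸ ⟨hx₁S₁, hx₂S₂⟩)

theorem stmt3 (S : Set ℕ) (hS : IsNumericalSemigroup S) :
    IsIrreducibleNS S ↔ (specialGaps S).encard ≤ 1 :=
  ⟨IsIrreducibleNS.encard_specialGaps_le_one, isIrreducibleNS_of_encard_specialGaps_le_one hS⟩
end

section
/- A numerical semigroup S with Frobenius number F is atomic (i.e., S cannot be written as the intersection of two numerical semigroups with Frobenius number F, each properly containing S) if and only if the number of special gaps of S is at most 2. -/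
/-!
Every special gap `x ≠ F` of `S` can be adjoined to `S` without changing the Frobenius number,
and conversely, if `S ⊊ T` with `F(T) = F(S)`, the largest element of `T \ S` is such a special
gap lying in `T`. Hence two distinct special gaps `x, y ≠ F` split `S` as
`(S ∪ {x}) ∩ (S ∪ {y})`, while a nontrivial splitting `S = S₁ ∩ S₂` yields special gaps
`x ∈ S₁ \ S₂` and `y ∈ S₂ \ S₁`, both different from `F`. Since `F` is itself a special gap,
the condition is `#E(S) ≤ 2`.
-/

lemma Set.encard_le_two_iff_subsingleton_diff {α : Type*} {s : Set α} {a : α} (ha : a ∈ s) :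
    s.encard ≤ 2 ↔ (s \ {a}).Subsingleton := by
  rw [← Set.encard_le_one_iff_subsingleton, ← Set.encard_sdiff_singleton_add_one ha,
    show (2 : ℕ∞) = 1 + 1 by norm_num]
  exact ENat.add_le_add_iff_right ENat.one_ne_top

lemma Set.insert_inter_insert_of_ne {α : Type*} {s : Set α} {x y : α} (hxy : x ≠ y) :
    insert x s ∩ insert y s = s := by
  ext
  grind

namespace IsFrobenius

variable {S : Set ℕ} {F : ℕ}

lemma mem_of_lt (hF : IsFrobenius S F) {m : ℕ} (hm : F < m) : m ∈ S :=
  by_contra fun h => (hF.2 m h).not_gt hm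

lemma insert (hF : IsFrobenius S F) {x : ℕ} (hxF : x ≠ F) : IsFrobenius (insert x S) F :=
  ⟨by simp [Ne.symm hxF, hF.1], fun m hm => hF.2 m fun h => hm (Set.mem_insert_of_mem x h)⟩

lemma mem_specialGaps (hF : IsFrobenius S F) (h0 : 0 ∈ S) : F ∈ specialGaps S := by
  have hF0 : 0 < F := Nat.pos_of_ne_zero fun h => hF.1 (h ▸ h0)
  exact ⟨hF.1, hF.mem_of_lt (by omega), fun s _ hs => hF.mem_of_lt (by omega)⟩

end IsFrobenius

lemma IsNumericalSemigroup.insert_of_mem_specialGaps_s4 {S : Set ℕ} (hS : IsNumericalSemigroup S)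
    {x : ℕ} (hx : x ∈ specialGaps S) : IsNumericalSemigroup (insert x S) := by
  obtain ⟨h0, hadd, hfin⟩ := hS
  obtain ⟨-, h2x, hxs⟩ := hx
  have hx_add : ∀ s ∈ S, x + s ∈ insert x S := fun s hs => by
    rcases eq_or_ne s 0 with rfl | hs0
    · exact Set.mem_insert x S
    · exact Set.mem_insert_of_mem x (hxs s hs hs0)
  refine ⟨Set.mem_insert_of_mem x h0, ?_, hfin.subset fun z hz h => hz (Set.mem_insert_of_mem x h)⟩
  rintro a b (rfl | ha) (rfl | hb)
  · exact Set.mem_insert_of_mem _ (by rwa [← two_mul])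
  · exact hx_add _ hb
  · rw [add_comm]; exact hx_add _ ha
  · exact Set.mem_insert_of_mem x (hadd a b ha hb)

/-- The largest element of `T \ S` is a special gap of `S`. -/
lemma exists_mem_specialGaps_of_ssubset {S T : Set ℕ} (hS : IsNumericalSemigroup S)
    (hT : IsNumericalSemigroup T) (hST : S ⊂ T) : ∃ a ∈ specialGaps S, a ∈ T := by
  have hfin : (T \ S).Finite := hS.2.2.subset fun z hz => hz.2
  obtain ⟨a, ⟨haT, haS⟩, hmax⟩ :=
    hfin.exists_maximal (Set.nonempty_of_ssubset hST)
  have above : ∀ b ∈ T, a < b → b ∈ S := fun b hb hab =>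
    by_contra fun hbS => hab.not_ge (hmax ⟨hb, hbS⟩ hab.le)
  have ha0 : a ≠ 0 := fun h => haS (h ▸ hS.1)
  refine ⟨a, ⟨haS, ?_, fun s hs hs0 => ?_⟩, haT⟩
  · exact above _ (two_mul a ▸ hT.2.1 a a haT haT) (by omega)
  · exact above _ (hT.2.1 a s haT (hST.subset hs)) (by omega)

theorem stmt4 (S : Set ℕ) (hS : IsNumericalSemigroup S) (F : ℕ)
    (hF : IsFrobenius S F) :
    (∀ S₁ S₂ : Set ℕ, IsNumericalSemigroup S₁ → IsNumericalSemigroup S₂ →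
      IsFrobenius S₁ F → IsFrobenius S₂ F → S = S₁ ∩ S₂ → S = S₁ ∨ S = S₂) ↔
    (specialGaps S).encard ≤ 2 := by
  rw [Set.encard_le_two_iff_subsingleton_diff (hF.mem_specialGaps hS.1)]
  constructor
  · rintro hatomic x ⟨hx, hxF⟩ y ⟨hy, hyF⟩
    by_contra hxy
    rcases hatomic _ _ (hS.insert_of_mem_specialGaps_s4 hx)
        (hS.insert_of_mem_specialGaps_s4 hy) (hF.insert hxF) (hF.insert hyF)
        (Set.insert_inter_insert_of_ne hxy).symm with h | h
    · exact hx.1 (h ▸ Set.mem_insert x S)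
    · exact hy.1 (h ▸ Set.mem_insert y S)
  · intro hsub S₁ S₂ hS₁ hS₂ hF₁ hF₂ hS₁₂
    by_contra! hne
    have gap_in {T : Set ℕ} (hT : IsNumericalSemigroup T) (hFT : IsFrobenius T F) (hST : S ⊆ T)
        (hne : S ≠ T) : ∃ a ∈ specialGaps S \ {F}, a ∈ T := by
      obtain ⟨a, ha, haT⟩ := exists_mem_specialGaps_of_ssubset hS hT (hST.ssubset_of_ne hne)
      exact ⟨a, ⟨ha, fun h => hFT.1 (h ▸ haT)⟩, haT⟩
    obtain ⟨a, ha, ha₁⟩ := gap_in hS₁ hF₁ (hS₁₂ ▸ Set.inter_subset_left) hne.1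
    obtain ⟨b, hb, hb₂⟩ := gap_in hS₂ hF₂ (hS₁₂ ▸ Set.inter_subset_right) hne.2
    obtain rfl := hsub ha hb
    exact ha.1.1 (hS₁₂ ▸ ⟨ha₁, hb₂⟩)
end

section
/- Let g₁ < g₂ be positive integers. There exists a numerical semigroup S with E(S) = {g₁, g₂} if and only if g₂/2 < g₁ and at least one of the following holds: (g₂ − g₁) divides g₂, or (2g₁ − g₂) does not divide g₂. -/
/-!
The largest gap of a numerical semigroup is always special, and pushing any gap `g` up along `S`
(replacing `g` by `g + s` while that stays a gap) ends at a pseudo-Frobenius number `p`, which is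
special unless `2p` is a gap. If `E(S) = {g₁, g₂}` then `g₂` is the Frobenius number, and applying
this to the gaps `g₂ - g₁` and `2(g₂ - g₁)` forces `g₂ < 2g₁` and, when `e = 2g₁ - g₂` divides `g₂`
(so that `e` is a gap), forces `g₂ ∈ {3(g₂ - g₁), 4(g₂ - g₁)}`: otherwise `g₂ - g₁` would be a third
special gap.

Conversely, if `g₂ - g₁ ∣ g₂` then `{0} ∪ {x > g₂/2} \ {g₁, g₂}` works, and if `e ∤ g₂` then
`eℕ ∪ {x > g₂/2 : x ≠ g₁, x ∉ g₂ - eℕ}` works.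
-/

namespace IsNumericalSemigroup

variable {S : Set ℕ}

theorem zero_mem (hS : IsNumericalSemigroup S) : 0 ∈ S := hS.1

theorem add_mem (hS : IsNumericalSemigroup S) {a b : ℕ} (ha : a ∈ S) (hb : b ∈ S) :
    a + b ∈ S :=
  hS.2.1 a b ha hb

theorem mul_mem (hS : IsNumericalSemigroup S) (n : ℕ) {x : ℕ} (hx : x ∈ S) : n * x ∈ S := by
  induction n with
  | zero => simpa using hS.zero_mem
  | succ n ih => simpa [add_mul] using hS.add_mem ih hx

theorem exists_isFrobenius (hS : IsNumericalSemigroup S) {g : ℕ} (hg : g ∉ S) :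
    ∃ F, IsFrobenius S F := by
  obtain ⟨F, hF, hmax⟩ := Set.exists_max_image Sᶜ id hS.2.2 ⟨g, hg⟩
  exact ⟨F, hF, hmax⟩

theorem mem_specialGaps_of_isFrobenius (hS : IsNumericalSemigroup S) {F : ℕ}
    (hF : IsFrobenius S F) : F ∈ specialGaps S := by
  obtain ⟨hFS, hmax⟩ := hF
  have hF0 : F ≠ 0 := by rintro rfl; exact hFS hS.zero_mem
  refine ⟨hFS, by_contra fun h => ?_, fun s _ hs0 => by_contra fun h => ?_⟩
  · have := hmax _ h; omega
  · have := hmax _ h; omega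

theorem exists_add_pseudoFrobenius (hS : IsNumericalSemigroup S) {g : ℕ} (hg : g ∉ S) :
    ∃ c ∈ S, g + c ∉ S ∧ ∀ s ∈ S, s ≠ 0 → g + c + s ∈ S := by
  have hfin : {c | c ∈ S ∧ g + c ∉ S}.Finite :=
    (hS.2.2.preimage (add_right_injective g).injOn).subset fun _ hc => hc.2
  obtain ⟨c, ⟨hcS, hgc⟩, hmax⟩ :=
    Set.exists_max_image _ id hfin ⟨0, hS.zero_mem, by simpa using hg⟩
  refine ⟨c, hcS, hgc, fun s hs hs0 => by_contra fun h => ?_⟩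
  have := hmax (c + s) ⟨hS.add_mem hcS hs, by rwa [← add_assoc]⟩
  simp only [id_eq] at this
  omega

theorem exists_add_mem_specialGaps_or_two_mul_notMem (hS : IsNumericalSemigroup S) {g : ℕ}
    (hg : g ∉ S) : ∃ c ∈ S, g + c ∈ specialGaps S ∨ 2 * (g + c) ∉ S := by
  obtain ⟨c, hcS, hgc, hpf⟩ := hS.exists_add_pseudoFrobenius hg
  exact ⟨c, hcS, or_iff_not_imp_right.2 fun h2 => ⟨hgc, not_not.1 h2, hpf⟩⟩

end IsNumericalSemigroup

section TwoSpecialGaps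

variable {S : Set ℕ} {g₁ g₂ : ℕ}

theorem le_of_notMem_of_specialGaps_eq_pair (hS : IsNumericalSemigroup S)
    (hE : specialGaps S = {g₁, g₂}) (h12 : g₁ < g₂) {x : ℕ} (hx : x ∉ S) : x ≤ g₂ := by
  have hg₂ : g₂ ∉ S := (hE ▸ Or.inr rfl : g₂ ∈ specialGaps S).1
  obtain ⟨F, hF⟩ := hS.exists_isFrobenius hg₂
  have hFE : F ∈ ({g₁, g₂} : Set ℕ) := hE ▸ hS.mem_specialGaps_of_isFrobenius hF
  have hg₂F := hF.2 _ hg₂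
  rcases hFE with rfl | rfl
  · omega
  · exact hF.2 x hx

theorem exists_add_eq_or_two_mul_le_of_specialGaps_eq_pair (hS : IsNumericalSemigroup S)
    (hE : specialGaps S = {g₁, g₂}) (h12 : g₁ < g₂) {g : ℕ} (hg : g ∉ S) :
    ∃ c ∈ S, g + c = g₁ ∨ g + c = g₂ ∨ 2 * (g + c) ≤ g₂ := by
  obtain ⟨c, hcS, hc⟩ := hS.exists_add_mem_specialGaps_or_two_mul_notMem hg
  refine ⟨c, hcS, ?_⟩
  rcases hc with hc | hc
  · rw [hE] at hc
    rcases hc with hc | hc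
    · exact Or.inl hc
    · exact Or.inr (Or.inl hc)
  · exact Or.inr (Or.inr (le_of_notMem_of_specialGaps_eq_pair hS hE h12 hc))

theorem sub_notMem_of_specialGaps_eq_pair (hE : specialGaps S = {g₁, g₂}) (h12 : g₁ < g₂) :
    g₂ - g₁ ∉ S := by
  obtain ⟨-, -, hg₁⟩ : g₁ ∈ specialGaps S := hE ▸ Or.inl rfl
  have hg₂S : g₂ ∉ S := (hE ▸ Or.inr rfl : g₂ ∈ specialGaps S).1
  exact fun hd => hg₂S (by simpa [h12.le] using hg₁ _ hd (by omega))

theorem lt_two_mul_of_specialGaps_eq_pair (hS : IsNumericalSemigroup S)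
    (hE : specialGaps S = {g₁, g₂}) (h12 : g₁ < g₂) : g₂ < 2 * g₁ := by
  obtain ⟨hg₁S, h2g₁, -⟩ : g₁ ∈ specialGaps S := hE ▸ Or.inl rfl
  have hg₂S : g₂ ∉ S := (hE ▸ Or.inr rfl : g₂ ∈ specialGaps S).1
  have hdS := sub_notMem_of_specialGaps_eq_pair hE h12
  have h2 : g₂ ≠ 2 * g₁ := by rintro rfl; exact hg₂S h2g₁
  by_contra hge
  obtain ⟨c, hcS, hc⟩ := exists_add_eq_or_two_mul_le_of_specialGaps_eq_pair hS hE h12 hdS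
  have hc₁ : c = g₁ := by omega
  exact hg₁S (hc₁ ▸ hcS)

theorem sub_mem_specialGaps_of_specialGaps_eq_pair (hS : IsNumericalSemigroup S)
    (hE : specialGaps S = {g₁, g₂}) (h12 : g₁ < g₂) (heS : 2 * g₁ - g₂ ∉ S)
    (h3 : 3 * (2 * g₁ - g₂) ≤ 2 * (g₂ - g₁)) : g₂ - g₁ ∈ specialGaps S := by
  have hg₁S : g₁ ∉ S := (hE ▸ Or.inl rfl : g₁ ∈ specialGaps S).1
  have hdS := sub_notMem_of_specialGaps_eq_pair hE h12
  have h2dS : 2 * (g₂ - g₁) ∈ S := by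
    by_contra h2dS
    obtain ⟨c, hcS, hc⟩ := exists_add_eq_or_two_mul_le_of_specialGaps_eq_pair hS hE h12 h2dS
    have hc : c = 2 * g₁ - g₂ := by omega
    exact heS (hc ▸ hcS)
  refine ⟨hdS, h2dS, fun s hs hs0 => by_contra fun hds => ?_⟩
  obtain ⟨c, hcS, hc⟩ := hS.exists_add_mem_specialGaps_or_two_mul_notMem hds
  have hscS := hS.add_mem hs hcS
  have h2p : 2 * (g₂ - g₁ + s + c) ∈ S := by
    simpa [two_mul, add_assoc, add_left_comm] using hS.add_mem h2dS (hS.add_mem hscS hscS)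
  rw [hE, or_iff_left (not_not_intro h2p), Set.mem_insert_iff, Set.mem_singleton_iff] at hc
  rcases hc with hc | hc
  · exact heS (by rwa [show s + c = 2 * g₁ - g₂ by omega] at hscS)
  · exact hg₁S (by rwa [show s + c = g₁ by omega] at hscS)

theorem sub_dvd_of_specialGaps_eq_pair (hS : IsNumericalSemigroup S)
    (hE : specialGaps S = {g₁, g₂}) (h12 : g₁ < g₂) (he : (2 * g₁ - g₂) ∣ g₂) :
    (g₂ - g₁) ∣ g₂ := by
  have hg₂S : g₂ ∉ S := (hE ▸ Or.inr rfl : g₂ ∈ specialGaps S).1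
  have hlt := lt_two_mul_of_specialGaps_eq_pair hS hE h12
  have heS : 2 * g₁ - g₂ ∉ S := by
    obtain ⟨k, hk⟩ := he
    exact fun h => hg₂S (by rw [hk, mul_comm]; exact hS.mul_mem k h)
  obtain ⟨m, hm⟩ : (2 * g₁ - g₂) ∣ 2 * (g₂ - g₁) := by
    simpa [show g₂ - (2 * g₁ - g₂) = 2 * (g₂ - g₁) by omega] using Nat.dvd_sub he dvd_rfl
  have hm3 : m < 3 := by
    by_contra hm3
    have h3 : 3 * (2 * g₁ - g₂) ≤ 2 * (g₂ - g₁) := by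
      rw [hm, mul_comm]; exact Nat.mul_le_mul_left _ (by omega)
    have hd := sub_mem_specialGaps_of_specialGaps_eq_pair hS hE h12 heS h3
    rw [hE, Set.mem_insert_iff, Set.mem_singleton_iff] at hd
    omega
  interval_cases m
  · omega
  · exact ⟨4, by omega⟩
  · exact ⟨3, by omega⟩

end TwoSpecialGaps

section AboveHalf

variable {g₁ g₂ : ℕ}

def aboveHalfExcept (g₁ g₂ : ℕ) : Set ℕ := {x | x = 0 ∨ (g₂ / 2 < x ∧ x ≠ g₁ ∧ x ≠ g₂)}

theorem isNumericalSemigroup_aboveHalfExcept (h12 : g₁ ≤ g₂) :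
    IsNumericalSemigroup (aboveHalfExcept g₁ g₂) := by
  refine ⟨Or.inl rfl, fun x y hx hy => ?_, (Set.finite_Iic g₂).subset fun x hx => ?_⟩
  · simp only [aboveHalfExcept, Set.mem_ofPred_eq] at hx hy ⊢
    omega
  · simp only [aboveHalfExcept, Set.mem_compl_iff, Set.mem_ofPred_eq, Set.mem_Iic] at hx ⊢
    omega

theorem specialGaps_aboveHalfExcept (h12 : g₁ < g₂) (hlt : g₂ < 2 * g₁)
    (hd : (g₂ - g₁) ∣ g₂) : specialGaps (aboveHalfExcept g₁ g₂) = {g₁, g₂} := by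
  -- `g₂ = k(g₂ - g₁)` with `2 < k`, and `2(g₂ - g₁) > g₂/2` forces `k = 3`, i.e. `2(g₂ - g₁) = g₁`.
  have h2d : 2 * (g₂ - g₁) ∉ aboveHalfExcept g₁ g₂ := by
    obtain ⟨k, hk⟩ := hd
    simp only [aboveHalfExcept, Set.mem_ofPred_eq]
    intro h
    have hk4 : k < 4 := Nat.lt_of_mul_lt_mul_left (a := g₂ - g₁) (by omega)
    interval_cases k <;> omega
  ext x
  simp only [specialGaps, Set.mem_insert_iff, Set.mem_singleton_iff, Set.mem_ofPred_eq]
  constructor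
  · rintro ⟨hx, h2x, hxs⟩
    by_contra hne
    have hxd : x ≠ g₂ - g₁ := by rintro rfl; exact h2d h2x
    simp only [aboveHalfExcept, Set.mem_ofPred_eq] at hx h2x hxs
    have := hxs (g₂ - x) (by omega) (by omega)
    omega
  · rintro (rfl | rfl) <;> refine ⟨?_, ?_, fun s hs hs0 => ?_⟩ <;>
      simp only [aboveHalfExcept, Set.mem_ofPred_eq] at * <;> omega

end AboveHalf

section MultiplesOrAboveHalf

variable {e g₁ g₂ : ℕ}

def multiplesOrAboveHalf (e g₁ g₂ : ℕ) : Set ℕ :=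
  {x | e ∣ x ∨ (g₂ / 2 < x ∧ x ≠ g₁ ∧ (g₂ < x ∨ ¬ e ∣ g₂ - x))}

theorem add_mem_multiplesOrAboveHalf (he : e + g₂ = 2 * g₁) {x y : ℕ} (hx : e ∣ x)
    (hy : y ∈ multiplesOrAboveHalf e g₁ g₂) : x + y ∈ multiplesOrAboveHalf e g₁ g₂ := by
  rcases hy with hy | ⟨hy, hy₁, hy₂⟩
  · exact Or.inl (dvd_add hx hy)
  rcases Nat.eq_zero_or_pos x with rfl | hx0
  · rw [zero_add]; exact Or.inr ⟨hy, hy₁, hy₂⟩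
  have hex : e ≤ x := Nat.le_of_dvd hx0 hx
  refine Or.inr ⟨by omega, by omega, or_iff_not_imp_left.2 fun hxy h => ?_⟩
  refine hy₂.resolve_left (by omega) ?_
  rwa [show g₂ - y = g₂ - (x + y) + x by omega, Nat.dvd_add_left hx]

theorem isNumericalSemigroup_multiplesOrAboveHalf (he : e + g₂ = 2 * g₁) (h12 : g₁ < g₂) :
    IsNumericalSemigroup (multiplesOrAboveHalf e g₁ g₂) := by
  refine ⟨Or.inl (dvd_zero e), fun x y hx hy => ?_, (Set.finite_Iic g₂).subset fun x hx => ?_⟩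
  · rcases hx with hx | hx
    · exact add_mem_multiplesOrAboveHalf he hx hy
    rcases hy with hy | hy
    · rw [add_comm]; exact add_mem_multiplesOrAboveHalf he hy (Or.inr hx)
    · exact Or.inr ⟨by omega, by omega, Or.inl (by omega)⟩
  · by_contra h
    rw [Set.mem_Iic, not_le] at h
    exact hx (Or.inr ⟨by omega, by omega, Or.inl h⟩)

theorem notMem_multiplesOrAboveHalf_left (he : e + g₂ = 2 * g₁) (hndvd : ¬ e ∣ g₂) :
    g₁ ∉ multiplesOrAboveHalf e g₁ g₂ := by
  rintro (h | h)
  · refine hndvd ((Nat.dvd_add_left (dvd_refl e)).1 ?_)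
    rw [add_comm, he, two_mul]; exact dvd_add h h
  · exact h.2.1 rfl

theorem notMem_multiplesOrAboveHalf_right (hndvd : ¬ e ∣ g₂) :
    g₂ ∉ multiplesOrAboveHalf e g₁ g₂ := by
  rintro (h | ⟨-, -, h | h⟩)
  · exact hndvd h
  · omega
  · simp at h

theorem left_mem_specialGaps_multiplesOrAboveHalf (he : e + g₂ = 2 * g₁) (he0 : 0 < e)
    (h12 : g₁ < g₂) (hndvd : ¬ e ∣ g₂) : g₁ ∈ specialGaps (multiplesOrAboveHalf e g₁ g₂) := by
  have hedvd : ¬ e ∣ g₂ - g₁ := fun h => hndvd <| by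
    rw [show g₂ = (g₂ - g₁) + (g₂ - g₁) + e by omega]
    exact dvd_add (dvd_add h h) dvd_rfl
  refine ⟨notMem_multiplesOrAboveHalf_left he hndvd,
    Or.inr ⟨by omega, by omega, Or.inl (by omega)⟩, fun s hs hs0 => ?_⟩
  rcases hs with hs | hs
  · have hse : e ≤ s := Nat.le_of_dvd (by omega) hs
    refine Or.inr ⟨by omega, by omega, or_iff_not_imp_left.2 fun hs₂ h => hedvd ?_⟩
    rwa [show g₂ - g₁ = g₂ - (g₁ + s) + s by omega, Nat.dvd_add_left hs]
  · exact Or.inr ⟨by omega, by omega, Or.inl (by omega)⟩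

theorem right_mem_specialGaps_multiplesOrAboveHalf (h12 : g₁ < g₂) (hndvd : ¬ e ∣ g₂) :
    g₂ ∈ specialGaps (multiplesOrAboveHalf e g₁ g₂) :=
  ⟨notMem_multiplesOrAboveHalf_right hndvd, Or.inr ⟨by omega, by omega, Or.inl (by omega)⟩,
    fun s _ hs0 => Or.inr ⟨by omega, by omega, Or.inl (by omega)⟩⟩

theorem eq_or_eq_of_mem_specialGaps_multiplesOrAboveHalf (he : e + g₂ = 2 * g₁) (he0 : 0 < e)
    (hndvd : ¬ e ∣ g₂) {x : ℕ} (hx : x ∈ specialGaps (multiplesOrAboveHalf e g₁ g₂)) :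
    x = g₁ ∨ x = g₂ := by
  obtain ⟨hxT, hx2, hxs⟩ := hx
  have heT : e ∈ multiplesOrAboveHalf e g₁ g₂ := Or.inl dvd_rfl
  by_contra hne
  simp only [multiplesOrAboveHalf, Set.mem_ofPred_eq, not_or, not_and, not_not] at hxT
  obtain ⟨hxe, hxT⟩ := hxT
  by_cases hxg : x ≤ g₂ ∧ e ∣ g₂ - x
  · -- then `x + e` is again a gap
    obtain ⟨hxg, hdvd⟩ := hxg
    have hxe' : e ≤ g₂ - x := Nat.le_of_dvd (by omega) hdvd
    rcases hxs e heT he0.ne' with h | ⟨-, -, h | h⟩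
    · exact hxe ((Nat.dvd_add_left (dvd_refl e)).1 h)
    · omega
    · exact h (by rwa [show g₂ - x = g₂ - (x + e) + e by omega, Nat.dvd_add_left dvd_rfl] at hdvd)
  have hxL : x ≤ g₂ / 2 := by
    by_contra h
    exact hxg ⟨by have := (hxT (by omega) (by omega)).1; omega, (hxT (by omega) (by omega)).2⟩
  have hx0 : x ≠ 0 := by rintro rfl; exact hxe (dvd_zero e)
  by_cases hxd : x = g₂ - g₁
  · exact notMem_multiplesOrAboveHalf_left he hndvd (by
      simpa [show x + e = g₁ by omega] using hxs e heT he0.ne')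
  by_cases hx2g : 2 * x = g₂
  · exact notMem_multiplesOrAboveHalf_right hndvd (hx2g ▸ hx2)
  have hsT : g₂ - x ∈ multiplesOrAboveHalf e g₁ g₂ :=
    Or.inr ⟨by omega, by omega, Or.inr (by rwa [Nat.sub_sub_self (by omega)])⟩
  exact notMem_multiplesOrAboveHalf_right hndvd (by
    simpa [show x + (g₂ - x) = g₂ by omega] using hxs _ hsT (by omega))

theorem specialGaps_multiplesOrAboveHalf (he : e + g₂ = 2 * g₁) (he0 : 0 < e) (h12 : g₁ < g₂)
    (hndvd : ¬ e ∣ g₂) : specialGaps (multiplesOrAboveHalf e g₁ g₂) = {g₁, g₂} :=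
  Set.ext fun _ => ⟨eq_or_eq_of_mem_specialGaps_multiplesOrAboveHalf he he0 hndvd,
    by rintro (rfl | rfl)
       · exact left_mem_specialGaps_multiplesOrAboveHalf he he0 h12 hndvd
       · exact right_mem_specialGaps_multiplesOrAboveHalf h12 hndvd⟩

end MultiplesOrAboveHalf

theorem stmt7_general (g₁ g₂ : ℕ) (h12 : g₁ < g₂) :
    (∃ S : Set ℕ, IsNumericalSemigroup S ∧ specialGaps S = {g₁, g₂}) ↔
    (g₂ < 2 * g₁ ∧ ((g₂ - g₁) ∣ g₂ ∨ ¬ (2 * g₁ - g₂) ∣ g₂)) := by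
  constructor
  · rintro ⟨S, hS, hE⟩
    refine ⟨lt_two_mul_of_specialGaps_eq_pair hS hE h12, ?_⟩
    by_cases he : (2 * g₁ - g₂) ∣ g₂
    · exact Or.inl (sub_dvd_of_specialGaps_eq_pair hS hE h12 he)
    · exact Or.inr he
  · rintro ⟨hlt, hd | hndvd⟩
    · exact ⟨_, isNumericalSemigroup_aboveHalfExcept h12.le,
        specialGaps_aboveHalfExcept h12 hlt hd⟩
    · have he : 2 * g₁ - g₂ + g₂ = 2 * g₁ := by omega
      exact ⟨_, isNumericalSemigroup_multiplesOrAboveHalf he h12,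
        specialGaps_multiplesOrAboveHalf he (by omega) h12 hndvd⟩

theorem stmt7 (g₁ g₂ : ℕ) (h0 : 0 < g₁) (h12 : g₁ < g₂) :
    (∃ S : Set ℕ, IsNumericalSemigroup S ∧ specialGaps S = {g₁, g₂}) ↔
    (g₂ < 2 * g₁ ∧ ((g₂ - g₁) ∣ g₂ ∨ ¬ (2 * g₁ - g₂) ∣ g₂)) :=
  stmt7_general g₁ g₂ h12
end

section
/- If S is a numerical semigroup with Frobenius number F, then T = S ∪ {x ∈ ℕ \ S : F − x ∉ S and x > F/2} is an irreducible numerical semigroup with Frobenius number F. -/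
/-!
Adding to `S` every gap `x > F/2` whose complement `F - x` is also a gap keeps `F` a gap and
keeps the set closed under addition: if `s ∈ S` and `x` is such a gap with `s + x ∉ S`, then
`F - (s + x)` is a gap, since otherwise `F - x = (F - (s + x)) + s ∈ S`. The result `T` is maximal
among numerical semigroups not containing `F`: a new element `x` of a larger one `T'` must have
`F - x ∉ T'`, which forces `F - x` to be a gap of `S` and `2x > F` (`2x = F` would put `F = x + x`
in `T'`). Maximality with respect to not containing the Frobenius number gives irreducibility, since
`F` must be missing from one of the two semigroups whose intersection is `T`.
-/

theorem IsFrobenius.mem_of_lt_s14 {S : Set ℕ} {F n : ℕ} (hF : IsFrobenius S F) (hn : F < n) :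
    n ∈ S := by
  by_contra h
  exact absurd (hF.2 n h) (by omega)

theorem IsNumericalSemigroup.sub_notMem_of_notMem {S : Set ℕ} (hS : IsNumericalSemigroup S)
    {F x : ℕ} (hF : F ∉ S) (hx : x ∈ S) (hxF : x ≤ F) : F - x ∉ S := by
  intro h
  have hsum := hS.2.1 _ _ h hx
  rw [Nat.sub_add_cancel hxF] at hsum
  exact hF hsum

theorem IsIrreducibleNS.of_forall_eq_of_frobenius_notMem {T : Set ℕ} {F : ℕ}
    (hT : IsNumericalSemigroup T) (hF : IsFrobenius T F)
    (hmax : ∀ T', IsNumericalSemigroup T' → T ⊆ T' → F ∉ T' → T' = T) :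
    IsIrreducibleNS T := by
  refine ⟨hT, fun S₁ S₂ h₁ h₂ hT₁₂ => ?_⟩
  by_cases hF₁ : F ∈ S₁
  · have hF₂ : F ∉ S₂ := fun hF₂ => hF.1 (hT₁₂ ▸ ⟨hF₁, hF₂⟩)
    exact Or.inr (hmax S₂ h₂ (hT₁₂ ▸ Set.inter_subset_right) hF₂).symm
  · exact Or.inl (hmax S₁ h₁ (hT₁₂ ▸ Set.inter_subset_left) hF₁).symm

def extendByGaps (S : Set ℕ) (F : ℕ) : Set ℕ :=
  S ∪ {x : ℕ | x ∉ S ∧ F - x ∉ S ∧ F < 2 * x}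

section extendByGaps

variable {S : Set ℕ} {F : ℕ}

theorem subset_extendByGaps : S ⊆ extendByGaps S F := Set.subset_union_left

theorem add_mem_extendByGaps (hS : IsNumericalSemigroup S) (hF : IsFrobenius S F) {s x : ℕ}
    (hs : s ∈ S) (hx : x ∉ S ∧ F - x ∉ S ∧ F < 2 * x) : s + x ∈ extendByGaps S F := by
  obtain ⟨hxS, hFx, h2x⟩ := hx
  by_cases hsx : s + x ∈ S
  · exact Or.inl hsx
  refine Or.inr ⟨hsx, fun hc => hFx ?_, by omega⟩
  have hle : s + x ≤ F := hF.2 _ hsx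
  have hsum := hS.2.1 _ _ hc hs
  rwa [show F - (s + x) + s = F - x by omega] at hsum

theorem isNumericalSemigroup_extendByGaps (hS : IsNumericalSemigroup S) (hF : IsFrobenius S F) :
    IsNumericalSemigroup (extendByGaps S F) := by
  refine ⟨Or.inl hS.1, ?_, hS.2.2.subset (Set.compl_subset_compl.mpr subset_extendByGaps)⟩
  rintro a b (ha | ha) (hb | hb)
  · exact Or.inl (hS.2.1 a b ha hb)
  · exact add_mem_extendByGaps hS hF ha hb
  · exact add_comm b a ▸ add_mem_extendByGaps hS hF hb ha
  · exact Or.inl (hF.mem_of_lt_s14 (by linarith [ha.2.2, hb.2.2]))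

theorem isFrobenius_extendByGaps (hS : IsNumericalSemigroup S) (hF : IsFrobenius S F) :
    IsFrobenius (extendByGaps S F) F := by
  refine ⟨?_, fun m hm => hF.2 m fun h => hm (Or.inl h)⟩
  rintro (h | ⟨-, h, -⟩)
  · exact hF.1 h
  · exact h (Nat.sub_self F ▸ hS.1)

theorem eq_extendByGaps_of_frobenius_notMem (hF : IsFrobenius S F) {T : Set ℕ}
    (hT : IsNumericalSemigroup T) (hsub : extendByGaps S F ⊆ T) (hFT : F ∉ T) :
    T = extendByGaps S F := by
  refine Set.Subset.antisymm (fun x hx => ?_) hsub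
  by_cases hxS : x ∈ S
  · exact Or.inl hxS
  have hxF : x ≤ F := hF.2 x hxS
  have hFx : F - x ∉ T := hT.sub_notMem_of_notMem hFT hx hxF
  have hFxS : F - x ∉ S := fun h => hFx (hsub (Or.inl h))
  refine Or.inr ⟨hxS, hFxS, ?_⟩
  by_contra hle
  have hnot : ¬ (F - x ∉ S ∧ F - (F - x) ∉ S ∧ F < 2 * (F - x)) := fun h => hFx (hsub (Or.inr h))
  rw [Nat.sub_sub_self hxF] at hnot
  have hxx : x + x = F := by
    have : ¬ F < 2 * (F - x) := fun h => hnot ⟨hFxS, hxS, h⟩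
    omega
  exact hFT (hxx ▸ hT.2.1 x x hx hx)

end extendByGaps

theorem stmt14 (S : Set ℕ) (hS : IsNumericalSemigroup S) (F : ℕ)
    (hF : IsFrobenius S F) :
    IsIrreducibleNS (S ∪ {x : ℕ | x ∉ S ∧ F - x ∉ S ∧ F < 2 * x}) ∧
    IsFrobenius (S ∪ {x : ℕ | x ∉ S ∧ F - x ∉ S ∧ F < 2 * x}) F := by
  have hFT : IsFrobenius (extendByGaps S F) F := isFrobenius_extendByGaps hS hF
  refine ⟨?_, hFT⟩
  exact .of_forall_eq_of_frobenius_notMem (isNumericalSemigroup_extendByGaps hS hF) hFT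
    fun _ hT hsub hFT' => eq_extendByGaps_of_frobenius_notMem hF hT hsub hFT'
end

section
/- For every positive integer F, the set C(F), defined as {0} ∪ {n ∈ ℕ : n ≥ (F+1)/2} \ {F} when F is odd and {0} ∪ {n ∈ ℕ : n ≥ F/2 + 1} \ {F} when F is even, is an irreducible numerical semigroup with Frobenius number F. -/
/-!
A numerical semigroup `S` not containing `F` is maximal among the semigroups avoiding `F` as
soon as every gap `x ≠ F` has a partner `y ∈ S ∪ {x}` with `x + y = F`: a larger semigroup
containing `x` would contain `x + y = F`. Maximality implies irreducibility, since `F` must be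
missing from one of the two factors of `S = S₁ ∩ S₂`. For `C(F)` the partner of a gap
`x ∈ [1, F/2]` is `F - x`, which lies above `F/2`, or equals `x` when `F = 2x`.
-/

section Irreducible

variable {S T : Set ℕ} {F : ℕ}

lemma subset_of_forall_gap_add_eq (hT : ∀ a b, a ∈ T → b ∈ T → a + b ∈ T) (hST : S ⊆ T)
    (hFT : F ∉ T) (hgap : ∀ x ∉ S, x ≠ F → ∃ y, x + y = F ∧ (y ∈ S ∨ y = x)) : T ⊆ S := by
  intro x hxT
  by_contra hxS
  have hxF : x ≠ F := fun h => hFT (h ▸ hxT)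
  obtain ⟨y, hxy, hy⟩ := hgap x hxS hxF
  have hyT : y ∈ T := hy.elim (fun h => hST h) (fun h => h ▸ hxT)
  exact hFT (hxy ▸ hT x y hxT hyT)

lemma isIrreducibleNS_of_forall_gap_add_eq (hS : IsNumericalSemigroup S) (hF : F ∉ S)
    (hgap : ∀ x ∉ S, x ≠ F → ∃ y, x + y = F ∧ (y ∈ S ∨ y = x)) : IsIrreducibleNS S := by
  refine ⟨hS, fun S₁ S₂ h₁ h₂ heq => ?_⟩
  have hsub₁ : S ⊆ S₁ := heq ▸ Set.inter_subset_left
  have hsub₂ : S ⊆ S₂ := heq ▸ Set.inter_subset_right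
  by_cases hF₁ : F ∈ S₁
  · have hF₂ : F ∉ S₂ := fun hF₂ => hF (heq ▸ ⟨hF₁, hF₂⟩)
    exact Or.inr (hsub₂.antisymm (subset_of_forall_gap_add_eq h₂.2.1 hsub₂ hF₂ hgap))
  · exact Or.inl (hsub₁.antisymm (subset_of_forall_gap_add_eq h₁.2.1 hsub₁ hF₁ hgap))

end Irreducible

section NSC

variable {F n : ℕ}

lemma mem_NSC : n ∈ NSC F ↔ n = 0 ∨ (F / 2 < n ∧ n ≠ F) := by
  simp [NSC]

lemma isNumericalSemigroup_NSC (F : ℕ) : IsNumericalSemigroup (NSC F) := by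
  refine ⟨mem_NSC.2 (Or.inl rfl), fun a b ha hb => ?_, ?_⟩
  · rw [mem_NSC] at ha hb ⊢
    omega
  · refine (Set.finite_Iic F).subset fun m hm => ?_
    rw [Set.mem_compl_iff, mem_NSC] at hm
    simp only [Set.mem_Iic]
    omega

lemma isFrobenius_NSC (hF : 0 < F) : IsFrobenius (NSC F) F := by
  refine ⟨?_, fun m hm => ?_⟩ <;> rw [mem_NSC] at * <;> omega

lemma exists_add_eq_of_notMem_NSC (hn : n ∉ NSC F) (hnF : n ≠ F) :
    ∃ m, n + m = F ∧ (m ∈ NSC F ∨ m = n) := by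
  rw [mem_NSC] at hn
  exact ⟨F - n, by omega, by rw [mem_NSC]; omega⟩

end NSC

theorem stmt16 (F : ℕ) (hF : 0 < F) :
    IsIrreducibleNS (NSC F) ∧ IsFrobenius (NSC F) F :=
  ⟨isIrreducibleNS_of_forall_gap_add_eq (isNumericalSemigroup_NSC F) (isFrobenius_NSC hF).1
    fun _ hn hnF => exists_add_eq_of_notMem_NSC hn hnF, isFrobenius_NSC hF⟩
end

section
/- The numerical semigroup S generated by {5, 7, 9, 13}, i.e., S = {0, 5, 7, 9, 10, 12, 13, 14, ...} = ℕ \ {1, 2, 3, 4, 6, 8, 11}, satisfies E(S) = {8, 11}; in particular S is atomic with Frobenius number 11 but not irreducible. -/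
/-!
Adjoining a special gap `x` to `S` gives again a numerical semigroup, so two distinct special
gaps `8` and `11` write `S` as the intersection `(S ∪ {8}) ∩ (S ∪ {11})` of two strictly larger
numerical semigroups. Conversely, any numerical semigroup `T ⊋ S` avoiding the Frobenius
number `11` can only have gained the gap `8`: every other gap `x` has `k * x + s = 11` for some
`k ≥ 1` and `s ∈ S`. Hence two such `T` meeting in `S` cannot both be strictly larger.
-/

theorem Set.eq_or_eq_of_eq_inter_of_diff_subset_singleton {α : Type*} {S S₁ S₂ : Set α} {a : α}
    (h : S = S₁ ∩ S₂) (h₁ : S₁ \ S ⊆ {a}) (h₂ : S₂ \ S ⊆ {a}) : S = S₁ ∨ S = S₂ := by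
  by_contra! hne
  have gains_a {T : Set α} (hST : S ⊆ T) (hdiff : T \ S ⊆ {a}) (hne : S ≠ T) : a ∈ T \ S := by
    obtain ⟨x, hx⟩ := Set.nonempty_of_ssubset (hST.ssubset_of_ne hne)
    rwa [← hdiff hx]
  have ha₁ := gains_a (h ▸ Set.inter_subset_left) h₁ hne.1
  have ha₂ := gains_a (h ▸ Set.inter_subset_right) h₂ hne.2
  exact ha₁.2 (h ▸ ⟨ha₁.1, ha₂.1⟩)

namespace IsNumericalSemigroup

variable {S : Set ℕ}

theorem mul_add_mem (hS : IsNumericalSemigroup S) {x s : ℕ} (hx : x ∈ S) (hs : s ∈ S) :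
    ∀ k : ℕ, k * x + s ∈ S
  | 0 => by simpa using hs
  | k + 1 => by
    rw [add_mul, one_mul, add_right_comm]
    exact hS.2.1 _ _ (mul_add_mem hS hx hs k) hx

theorem not_isIrreducibleNS_of_mem_specialGaps (hS : IsNumericalSemigroup S) {x y : ℕ}
    (hx : x ∈ specialGaps S) (hy : y ∈ specialGaps S) (hxy : x ≠ y) : ¬ IsIrreducibleNS S := by
  rintro ⟨-, hirr⟩
  have hinter : S = insert x S ∩ insert y S := by
    ext z
    simp only [Set.mem_inter_iff, Set.mem_insert_iff]
    grind [hx.1, hy.1]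
  rcases hirr _ _ (hS.insert_of_mem_specialGaps hx) (hS.insert_of_mem_specialGaps hy) hinter
    with h | h
  · exact hx.1 (h ▸ Set.mem_insert x S)
  · exact hy.1 (h ▸ Set.mem_insert y S)

end IsNumericalSemigroup

theorem IsFrobenius.unique {S : Set ℕ} {F F' : ℕ} (h : IsFrobenius S F) (h' : IsFrobenius S F') :
    F = F' :=
  le_antisymm (h'.2 F h.1) (h.2 F' h'.1)

def S5_7_9_13 : Set ℕ := ({1, 2, 3, 4, 6, 8, 11} : Set ℕ)ᶜ

theorem mem_S5_7_9_13 {n : ℕ} :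
    n ∈ S5_7_9_13 ↔ ¬(n = 1 ∨ n = 2 ∨ n = 3 ∨ n = 4 ∨ n = 6 ∨ n = 8 ∨ n = 11) := by
  simp [S5_7_9_13]

theorem isNumericalSemigroup_S5_7_9_13 : IsNumericalSemigroup S5_7_9_13 := by
  refine ⟨mem_S5_7_9_13.2 (by omega), fun a b ha hb => ?_, ?_⟩
  · rw [mem_S5_7_9_13] at *
    omega
  · simp only [S5_7_9_13, compl_compl]
    exact Set.toFinite _

theorem isFrobenius_S5_7_9_13 : IsFrobenius S5_7_9_13 11 :=
  ⟨fun h => by simp [mem_S5_7_9_13] at h, fun m hm => by rw [mem_S5_7_9_13] at hm; omega⟩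

theorem specialGaps_S5_7_9_13 : specialGaps S5_7_9_13 = {8, 11} := by
  ext x
  simp only [specialGaps, Set.mem_ofPred_eq, Set.mem_insert_iff, Set.mem_singleton_iff]
  constructor
  · rintro ⟨hx, h2x, hxs⟩
    have hx5 := hxs 5 (mem_S5_7_9_13.2 (by omega)) (by omega)
    rw [mem_S5_7_9_13] at hx h2x hx5
    omega
  · rintro (rfl | rfl) <;>
      refine ⟨mem_S5_7_9_13.not.2 (by omega), mem_S5_7_9_13.2 (by omega), fun s hs hs0 => ?_⟩ <;>
      rw [mem_S5_7_9_13] at hs ⊢ <;>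
      omega

theorem diff_S5_7_9_13_subset {T : Set ℕ} (hT : IsNumericalSemigroup T)
    (hST : S5_7_9_13 ⊆ T) (h11 : 11 ∉ T) : T \ S5_7_9_13 ⊆ {8} := by
  rintro x ⟨hxT, hx⟩
  rw [mem_S5_7_9_13, not_not] at hx
  by_contra hx8
  obtain ⟨k, s, hs, hks⟩ : ∃ k s, s ∈ S5_7_9_13 ∧ k * x + s = 11 := by
    rcases hx with rfl | rfl | rfl | rfl | rfl | rfl | rfl
    · exact ⟨1, 10, mem_S5_7_9_13.2 (by omega), rfl⟩
    · exact ⟨1, 9, mem_S5_7_9_13.2 (by omega), rfl⟩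
    · exact ⟨2, 5, mem_S5_7_9_13.2 (by omega), rfl⟩
    · exact ⟨1, 7, mem_S5_7_9_13.2 (by omega), rfl⟩
    · exact ⟨1, 5, mem_S5_7_9_13.2 (by omega), rfl⟩
    · exact absurd rfl hx8
    · exact ⟨1, 0, mem_S5_7_9_13.2 (by omega), rfl⟩
  exact h11 (hks ▸ hT.mul_add_mem hxT (hST hs) k)

theorem isAtomicNS_S5_7_9_13 : IsAtomicNS S5_7_9_13 := by
  refine ⟨isNumericalSemigroup_S5_7_9_13, fun F S₁ S₂ hF hS₁ hS₂ hF₁ hF₂ h => ?_⟩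
  obtain rfl := isFrobenius_S5_7_9_13.unique hF
  exact Set.eq_or_eq_of_eq_inter_of_diff_subset_singleton h
    (diff_S5_7_9_13_subset hS₁ (h ▸ Set.inter_subset_left) hF₁.1)
    (diff_S5_7_9_13_subset hS₂ (h ▸ Set.inter_subset_right) hF₂.1)

theorem stmt19 :
    IsNumericalSemigroup (({1, 2, 3, 4, 6, 8, 11} : Set ℕ)ᶜ) ∧
    IsFrobenius (({1, 2, 3, 4, 6, 8, 11} : Set ℕ)ᶜ) 11 ∧
    specialGaps (({1, 2, 3, 4, 6, 8, 11} : Set ℕ)ᶜ) = {8, 11} ∧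
    IsAtomicNS (({1, 2, 3, 4, 6, 8, 11} : Set ℕ)ᶜ) ∧
    ¬ IsIrreducibleNS (({1, 2, 3, 4, 6, 8, 11} : Set ℕ)ᶜ) := by
  have h8 : 8 ∈ specialGaps S5_7_9_13 := specialGaps_S5_7_9_13 ▸ Or.inl rfl
  have h11 : 11 ∈ specialGaps S5_7_9_13 := specialGaps_S5_7_9_13 ▸ Or.inr rfl
  exact ⟨isNumericalSemigroup_S5_7_9_13, isFrobenius_S5_7_9_13, specialGaps_S5_7_9_13,
    isAtomicNS_S5_7_9_13,
    isNumericalSemigroup_S5_7_9_13.not_isIrreducibleNS_of_mem_specialGaps h8 h11 (by omega)⟩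
end
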